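/- Let P be a finite poset of height h with canonical antichain decomposition A_1, ..., A_h, and suppose i ≤ j are indices with |A'_i| = ... = |A'_j| = k, where A'_m = {x ∈ A_m : u_m(x) ≥ 1}. Then there exists d ≥ 0 and pairwise disjoint chains L_1, ..., L_{k−d}, each with j − i + 1 elements, with min L_p ∈ A'_i and max L_p ∈ A'_j, such that Σ_i ≥ Σ_j + d. -/

import Mathlib

/-- `x` is in the `i`-th canonical level of the poset: the longest chain whose maximum
element is `x` has exactly `i` elements. -/
def levelAt {P : Type*} [PartialOrder P] (i : ℕ) (x : P) : Prop :=
  (∃ c : Finset P, IsChain (· ≤ ·) (↑c : Set P) ∧ x ∈ c ∧ (∀ y ∈ c, y ≤ x) ∧ c.card = i) ∧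
  ∀ c : Finset P, IsChain (· ≤ ·) (↑c : Set P) → x ∈ c → (∀ y ∈ c, y ≤ x) → c.card ≤ i

/-- `u_i(x)`: the number of chains with `h - i + 1` elements whose minimum element is `x`
(`h` being the height of the poset). -/
noncomputable def uCount {P : Type*} [PartialOrder P] (h i : ℕ) (x : P) : ℕ :=
  Set.ncard {c : Finset P | IsChain (· ≤ ·) (↑c : Set P) ∧ x ∈ c ∧
    (∀ y ∈ c, x ≤ y) ∧ c.card = h - i + 1}

/-!
The chains are built downwards from `A'_j`, one level at a time. Every chain counted by
`u_{m+1}(x)` extends below `x` to one counted by `u_m(y)` for each `y < x`, and every element of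
`A'_m` or `A'_{m+1}` is comparable to some element of the other level; double counting then
shows that any set of current bottoms `S ⊆ A'_{m+1}` has Hall deficiency at most
`Σ_m - Σ_{m+1}` towards `A'_m`. The defect form of Hall's theorem therefore extends all but
that many chains, and the losses telescope to at most `Σ_i - Σ_j`.
-/

open Finset

namespace Finset

variable {α : Type*} [PartialOrder α] {s : Finset α}

theorem exists_forall_le_of_isChain (hc : IsChain (· ≤ ·) (s : Set α)) (hs : s.Nonempty) :
    ∃ a ∈ s, ∀ b ∈ s, a ≤ b := by
  obtain ⟨a, ha⟩ := s.exists_minimal hs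
  exact ⟨a, ha.prop, fun b hb => (hc.total ha.prop hb).elim id (ha.le_of_le hb)⟩

theorem exists_forall_ge_of_isChain (hc : IsChain (· ≤ ·) (s : Set α)) (hs : s.Nonempty) :
    ∃ a ∈ s, ∀ b ∈ s, b ≤ a := by
  obtain ⟨a, ha⟩ := s.exists_maximal hs
  exact ⟨a, ha.prop, fun b hb => (hc.total ha.prop hb).elim (ha.le_of_ge hb) id⟩

theorem isChain_insert_of_le [DecidableEq α] {a : α} (hc : IsChain (· ≤ ·) (s : Set α))
    (ha : ∀ b ∈ s, a ≤ b) :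
    IsChain (· ≤ ·) ((insert a s : Finset α) : Set α) := by
  rw [coe_insert]
  exact hc.insert fun b hb _ => Or.inl (ha b hb)

theorem isChain_insert_of_ge [DecidableEq α] {a : α} (hc : IsChain (· ≤ ·) (s : Set α))
    (ha : ∀ b ∈ s, b ≤ a) :
    IsChain (· ≤ ·) ((insert a s : Finset α) : Set α) := by
  rw [coe_insert]
  exact hc.insert fun b hb _ => Or.inr (ha b hb)

end Finset

section Levels

variable {α : Type*} [PartialOrder α] {m n h : ℕ} {x y : α}

theorem card_add_card_le_of_isChain
    (hub : ∀ c : Finset α, IsChain (· ≤ ·) (c : Set α) → #c ≤ h) {d e : Finset α}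
    (hd : IsChain (· ≤ ·) (d : Set α)) (hxd : x ∈ d) (hdx : ∀ z ∈ d, z ≤ x)
    (he : IsChain (· ≤ ·) (e : Set α)) (hxe : x ∈ e) (hex : ∀ z ∈ e, x ≤ z) :
    #d + #e ≤ h + 1 := by
  classical
  have hunion : IsChain (· ≤ ·) ((d ∪ e : Finset α) : Set α) := by
    rw [coe_union]
    exact isChain_union.2 ⟨hd, he, fun a ha b hb _ => Or.inl ((hdx a ha).trans (hex b hb))⟩
  have hinter : d ∩ e = {x} :=
    eq_singleton_iff_unique_mem.2 ⟨mem_inter.2 ⟨hxd, hxe⟩,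
      fun z hz => le_antisymm (hdx z (mem_inter.1 hz).1) (hex z (mem_inter.1 hz).2)⟩
  have := card_union_add_card_inter d e
  rw [hinter, card_singleton] at this
  have := hub _ hunion
  omega

theorem levelAt.exists_chain_card_succ (hy : levelAt m y) (hyx : y < x) :
    ∃ c : Finset α, IsChain (· ≤ ·) (c : Set α) ∧ x ∈ c ∧ (∀ z ∈ c, z ≤ x) ∧ #c = m + 1 := by
  classical
  obtain ⟨⟨c, hc, -, hcy, rfl⟩, -⟩ := hy
  have hxc : x ∉ c := fun hxc => (hcy x hxc).not_gt hyx
  refine ⟨insert x c, isChain_insert_of_ge hc fun z hz => (hcy z hz).trans hyx.le,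
    mem_insert_self x c, fun z hz => ?_, card_insert_of_notMem hxc⟩
  rcases mem_insert.1 hz with rfl | hz
  exacts [le_rfl, (hcy z hz).trans hyx.le]

theorem levelAt_lt_of_lt (hy : levelAt m y) (hx : levelAt n x) (hyx : y < x) : m < n := by
  obtain ⟨c, hc, hxc, hcx, hcard⟩ := hy.exists_chain_card_succ hyx
  have := hx.2 c hc hxc hcx
  omega

theorem levelAt_le_of_le (hy : levelAt m y) (hx : levelAt n x) (hyx : y ≤ x) : m ≤ n := by
  rcases hyx.lt_or_eq with hyx | rfl
  · exact (levelAt_lt_of_lt hy hx hyx).le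
  · obtain ⟨⟨c, hc, hyc, hcy, rfl⟩, -⟩ := hy
    exact hx.2 c hc hyc hcy

theorem levelAt.exists_lt (hx : levelAt (m + 1) x) (hm : 0 < m) : ∃ y < x, levelAt m y := by
  classical
  obtain ⟨⟨c, hc, hxc, hcx, hcard⟩, hxub⟩ := hx
  have hc' : IsChain (· ≤ ·) ((c.erase x : Finset α) : Set α) :=
    hc.mono (coe_subset.2 (erase_subset x c))
  have hcard' : #(c.erase x) = m := by rw [card_erase_of_mem hxc, hcard]; rfl
  obtain ⟨y, hy, hytop⟩ := exists_forall_ge_of_isChain hc' (card_pos.1 (by omega))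
  have hyx : y < x := lt_of_le_of_ne (hcx y (mem_of_mem_erase hy)) (ne_of_mem_erase hy)
  refine ⟨y, hyx, ⟨c.erase x, hc', hy, hytop, hcard'⟩, fun d hd hyd hdy => ?_⟩
  have hxd : x ∉ d := fun hxd => (hdy x hxd).not_gt hyx
  have := hxub (insert x d) (isChain_insert_of_ge hd fun z hz => (hdy z hz).trans hyx.le)
    (mem_insert_self x d) fun z hz => by
      rcases mem_insert.1 hz with rfl | hz
      exacts [le_rfl, (hdy z hz).trans hyx.le]
  rw [card_insert_of_notMem hxd] at this
  omega

end Levels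

section ChainCount

variable {α : Type*} [PartialOrder α] [Fintype α] {m n h : ℕ} {x y : α}

open Classical in
noncomputable def chainsFrom (n : ℕ) (x : α) : Finset (Finset α) :=
  {c | IsChain (· ≤ ·) (c : Set α) ∧ x ∈ c ∧ (∀ y ∈ c, x ≤ y) ∧ #c = n}

theorem mem_chainsFrom {c : Finset α} :
    c ∈ chainsFrom n x ↔ IsChain (· ≤ ·) (c : Set α) ∧ x ∈ c ∧ (∀ y ∈ c, x ≤ y) ∧ #c = n := by
  simp [chainsFrom]

theorem uCount_eq_card_chainsFrom : uCount h m x = #(chainsFrom (h - m + 1) x) := by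
  rw [uCount, ← Set.ncard_coe_finset]
  congr
  ext c
  simp [mem_chainsFrom]

theorem insert_mem_chainsFrom [DecidableEq α] {c : Finset α} (hc : c ∈ chainsFrom n x)
    (hyx : y < x) : y ∉ c ∧ insert y c ∈ chainsFrom (n + 1) y := by
  obtain ⟨hch, -, hxc, rfl⟩ := mem_chainsFrom.1 hc
  have hyc : y ∉ c := fun hyc => (hxc y hyc).not_gt hyx
  have hy : ∀ z ∈ c, y ≤ z := fun z hz => hyx.le.trans (hxc z hz)
  refine ⟨hyc, mem_chainsFrom.2 ⟨isChain_insert_of_le hch hy, mem_insert_self y c,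
    fun z hz => ?_, card_insert_of_notMem hyc⟩⟩
  rcases mem_insert.1 hz with rfl | hz
  exacts [le_rfl, hy z hz]

theorem disjoint_chainsFrom (hxy : x ≠ y) : Disjoint (chainsFrom n x) (chainsFrom n y) :=
  disjoint_left.2 fun _ hx hy =>
    hxy <| le_antisymm ((mem_chainsFrom.1 hx).2.2.1 y (mem_chainsFrom.1 hy).2.1)
      ((mem_chainsFrom.1 hy).2.2.1 x (mem_chainsFrom.1 hx).2.1)

/-- Putting `y` below the chains starting at the various `x ∈ F` is injective. -/
theorem sum_card_chainsFrom_le {F : Finset α} (hF : ∀ x ∈ F, y < x) :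
    ∑ x ∈ F, #(chainsFrom n x) ≤ #(chainsFrom (n + 1) y) := by
  classical
  rw [← card_biUnion fun x _ x' _ hne => disjoint_chainsFrom hne]
  refine card_le_card_of_injOn (insert y) (fun c hc => ?_) fun c hc c' hc' hcc' => ?_
  · obtain ⟨x, hx, hcx⟩ := mem_biUnion.1 hc
    exact (insert_mem_chainsFrom hcx (hF x hx)).2
  · obtain ⟨x, hx, hcx⟩ := mem_biUnion.1 (mem_coe.1 hc)
    obtain ⟨x', hx', hcx'⟩ := mem_biUnion.1 (mem_coe.1 hc')
    rw [← erase_insert (insert_mem_chainsFrom hcx (hF x hx)).1,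
      ← erase_insert (insert_mem_chainsFrom hcx' (hF x' hx')).1]
    exact congrArg (·.erase y) hcc'

theorem sum_uCount_succ_le (hm : m < h) {F : Finset α} (hF : ∀ x ∈ F, y < x) :
    ∑ x ∈ F, uCount h (m + 1) x ≤ uCount h m y := by
  simp only [uCount_eq_card_chainsFrom]
  rw [show h - m + 1 = h - (m + 1) + 1 + 1 by omega]
  exact sum_card_chainsFrom_le hF

theorem exists_lt_of_levelAt_succ (hx : levelAt (m + 1) x) (hux : 0 < uCount h (m + 1) x)
    (hm : 0 < m) (hmh : m < h) : ∃ y < x, levelAt m y ∧ 0 < uCount h m y := by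
  obtain ⟨y, hyx, hy⟩ := hx.exists_lt hm
  refine ⟨y, hyx, hy, hux.trans_le ?_⟩
  simpa using sum_uCount_succ_le hmh (F := {x}) (by simpa using hyx)

theorem exists_gt_of_levelAt (hub : ∀ c : Finset α, IsChain (· ≤ ·) (c : Set α) → #c ≤ h)
    (hy : levelAt m y) (huy : 0 < uCount h m y) (hmh : m < h) :
    ∃ x, y < x ∧ levelAt (m + 1) x ∧ 0 < uCount h (m + 1) x := by
  classical
  simp only [uCount_eq_card_chainsFrom] at huy ⊢
  obtain ⟨c, hc⟩ := card_pos.1 huy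
  obtain ⟨hch, hyc, hcy, hcard⟩ := mem_chainsFrom.1 hc
  have hch' : IsChain (· ≤ ·) ((c.erase y : Finset α) : Set α) :=
    hch.mono (coe_subset.2 (erase_subset y c))
  have hcard' : #(c.erase y) = h - m := by rw [card_erase_of_mem hyc, hcard]; rfl
  obtain ⟨x, hx, hxbot⟩ := exists_forall_le_of_isChain hch' (card_pos.1 (by omega))
  have hyx : y < x := lt_of_le_of_ne (hcy x (mem_of_mem_erase hx)) (ne_of_mem_erase hx).symm
  refine ⟨x, hyx, ⟨hy.exists_chain_card_succ hyx, fun d hd hxd hdx => ?_⟩,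
    card_pos.2 ⟨c.erase y, mem_chainsFrom.2 ⟨hch', hx, hxbot, by omega⟩⟩⟩
  have := card_add_card_le_of_isChain hub hd hxd hdx hch' hx hxbot
  omega

end ChainCount

section Bipartite

variable {α β ι : Type*}

/-- Double counting gives `∑_C g w ≤ ∑_B v`, where `g x ≥ 1` is the degree of `x`; combine it with
`w + g ≤ g w + 1` and `∑_C g ≥ #S + #B - #N(S)`. -/
theorem card_add_sum_le_card_biUnion_add_sum [DecidableEq α] {B : Finset α} {C : Finset β}
    (r : α → β → Prop) [DecidableRel r] {v : α → ℕ} {w : β → ℕ} (hw : ∀ x ∈ C, 0 < w x)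
    (hup : ∀ y ∈ B, ∃ x ∈ C, r y x) (hdown : ∀ x ∈ C, ∃ y ∈ B, r y x)
    (hvw : ∀ y ∈ B, ∑ x ∈ C with r y x, w x ≤ v y) {S : Finset β} (hS : S ⊆ C) :
    #S + (∑ x ∈ C, w x + #B) ≤ #(S.biUnion fun x => {y ∈ B | r y x}) + (∑ y ∈ B, v y + #C) := by
  classical
  set N : β → Finset α := fun x => {y ∈ B | r y x}
  have hN : ∀ x ∈ C, 0 < #(N x) := fun x hx => by
    obtain ⟨y, hy, hyx⟩ := hdown x hx
    exact card_pos.2 ⟨y, mem_filter.2 ⟨hy, hyx⟩⟩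
  have double_count : ∑ x ∈ C, #(N x) * w x ≤ ∑ y ∈ B, v y := calc
    ∑ x ∈ C, #(N x) * w x = ∑ y ∈ B, ∑ x ∈ C with r y x, w x := by
      simp only [N, card_filter, sum_mul, ite_mul, one_mul, zero_mul, sum_filter]
      exact sum_comm
    _ ≤ ∑ y ∈ B, v y := sum_le_sum hvw
  have termwise : ∑ x ∈ C, (w x + #(N x)) ≤ ∑ x ∈ C, (#(N x) * w x + 1) :=
    sum_le_sum fun x hx => by nlinarith [hw x hx, hN x hx]
  have on_S : #S ≤ ∑ x ∈ S, #(N x) := card_eq_sum_ones S ▸ sum_le_sum fun x hx => hN x (hS hx)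
  have off_S : #B ≤ #(S.biUnion N) + ∑ x ∈ C \ S, #(N x) := by
    have hcover : B ⊆ S.biUnion N ∪ (C \ S).biUnion N := fun y hy => by
      obtain ⟨x, hx, hyx⟩ := hup y hy
      have hyN : y ∈ N x := mem_filter.2 ⟨hy, hyx⟩
      by_cases hxS : x ∈ S
      exacts [mem_union_left _ (mem_biUnion.2 ⟨x, hxS, hyN⟩),
        mem_union_right _ (mem_biUnion.2 ⟨x, mem_sdiff.2 ⟨hx, hxS⟩, hyN⟩)]
    have := card_le_card hcover
    have := card_union_le (S.biUnion N) ((C \ S).biUnion N)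
    have := card_biUnion_le (s := C \ S) (t := N)
    omega
  have hsplit := sum_sdiff hS (f := fun x => #(N x))
  rw [sum_add_distrib, sum_add_distrib, sum_const, smul_eq_mul, mul_one] at termwise
  omega

theorem exists_injOn_mem_disjSum_of_card_le_card_biUnion_add [DecidableEq α] [Nonempty α]
    {s : Finset ι} {t : ι → Finset α} {d : ℕ} (hs : ∀ s' ⊆ s, #s' ≤ #(s'.biUnion t) + d) :
    ∃ F : ι → α ⊕ Fin d, Set.InjOn F s ∧ ∀ i ∈ s, F i ∈ (t i).disjSum univ := by
  classical
  -- Hall's theorem after adding `d` new vertices adjacent to everything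
  let t' : s → Finset (α ⊕ Fin d) := fun i => (t i).disjSum univ
  have hall : ∀ u : Finset s, #u ≤ #(u.biUnion t') := fun u => by
    rcases u.eq_empty_or_nonempty with rfl | ⟨i₀, hi₀⟩
    · simp
    have hsub : ((u.map (Function.Embedding.subtype _)).biUnion t).disjSum univ ⊆
        u.biUnion t' := by
      rintro (a | b) hab
      · obtain ⟨i, hi, hai⟩ := mem_biUnion.1 (inl_mem_disjSum.1 hab)
        obtain ⟨j, hj, rfl⟩ := mem_map.1 hi
        exact mem_biUnion.2 ⟨j, hj, inl_mem_disjSum.2 hai⟩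
      · exact mem_biUnion.2 ⟨i₀, hi₀, inr_mem_disjSum.2 (mem_univ b)⟩
    have := hs (u.map (Function.Embedding.subtype _))
      fun i hi => by obtain ⟨j, -, rfl⟩ := mem_map.1 hi; exact j.2
    rw [card_map] at this
    have := card_le_card hsub
    rw [card_disjSum, card_univ, Fintype.card_fin] at this
    omega
  obtain ⟨f, hfinj, hft⟩ := (all_card_le_biUnion_card_iff_exists_injective t').1 hall
  refine ⟨fun i => if hi : i ∈ s then f ⟨i, hi⟩ else .inl (Classical.arbitrary α),
    fun i hi i' hi' hii' => ?_, fun i hi => ?_⟩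
  · simp only [mem_coe] at hi hi'
    simp only [dif_pos hi, dif_pos hi'] at hii'
    exact congrArg Subtype.val (hfinj hii')
  · simpa [dif_pos hi] using hft ⟨i, hi⟩

theorem exists_subset_injOn_of_card_le_card_biUnion_add [DecidableEq α] [Nonempty α]
    {s : Finset ι} {t : ι → Finset α} {d : ℕ} (hs : ∀ s' ⊆ s, #s' ≤ #(s'.biUnion t) + d) :
    ∃ s' ⊆ s, #s ≤ #s' + d ∧ ∃ f : ι → α, Set.InjOn f s' ∧ ∀ i ∈ s', f i ∈ t i := by
  classical
  obtain ⟨F, hFinj, hFt⟩ := exists_injOn_mem_disjSum_of_card_le_card_biUnion_add hs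
  let g : ι → α := fun i => (F i).elim id fun _ => Classical.arbitrary α
  have hFg : ∀ i, (F i).isLeft → F i = .inl (g i) := fun i hi => by
    obtain ⟨a, ha⟩ := Sum.isLeft_iff.1 hi
    simp only [g, ha, Sum.elim_inl, id]
  refine ⟨{i ∈ s | (F i).isLeft}, filter_subset _ _, ?_, g, fun i hi i' hi' hii' => ?_,
    fun i hi => ?_⟩
  · have hright : #{i ∈ s | ¬(F i).isLeft} ≤ #(univ.map (.inr : Fin d ↪ α ⊕ Fin d)) := by
      refine card_le_card_of_injOn F (fun i hi => ?_) (hFinj.mono (filter_subset _ s))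
      obtain ⟨b, hb⟩ := Sum.isRight_iff.1 (Sum.not_isLeft.1 (mem_filter.1 hi).2)
      simp [hb]
    rw [card_map, card_univ, Fintype.card_fin] at hright
    have := card_filter_add_card_filter_not (s := s) fun i => (F i).isLeft
    omega
  · have hi := mem_filter.1 hi
    have hi' := mem_filter.1 hi'
    exact hFinj hi.1 hi'.1 (by rw [hFg i hi.2, hFg i' hi'.2, hii'])
  · have hi := mem_filter.1 hi
    simpa [hFg i hi.2] using hFt i hi.1

end Bipartite

section ChainFamilies

variable {α : Type*} [PartialOrder α] {n : ℕ} {S : Finset α} {L : α → Finset α} {b : α → α}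

/-- Chains are indexed by their tops, which stay fixed while the chains grow downwards. -/
def IsChainFamily (S : Finset α) (L : α → Finset α) (b : α → α) (n : ℕ) : Prop :=
  (S : Set α).PairwiseDisjoint L ∧ ∀ t ∈ S, IsChain (· ≤ ·) (L t : Set α) ∧ #(L t) = n ∧
    b t ∈ L t ∧ t ∈ L t ∧ (L t : Set α) ⊆ Set.Icc (b t) t

theorem isChainFamily_singleton (S : Finset α) : IsChainFamily S (fun t => {t}) id 1 := by
  refine ⟨fun t _ t' _ htt' => disjoint_singleton.2 htt', fun t _ => ?_⟩
  simp [Set.subsingleton_singleton.isChain]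

namespace IsChainFamily

theorem injOn_bot (hF : IsChainFamily S L b n) : Set.InjOn b S := by
  intro t ht t' ht' htt'
  by_contra hne
  exact disjoint_left.1 (hF.1 ht ht' hne) (hF.2 t ht).2.2.1 (htt' ▸ (hF.2 t' ht').2.2.1)

theorem insert_below [DecidableEq α] (hF : IsChainFamily S L b n) {T : Finset α} (hT : T ⊆ S)
    {f : α → α} (hf : Set.InjOn f T) (hfb : ∀ t ∈ T, f t < b t)
    (hfL : ∀ t ∈ T, ∀ t' ∈ T, f t ∉ L t') :
    IsChainFamily T (fun t => insert (f t) (L t)) f (n + 1) := by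
  refine ⟨fun t ht t' ht' htt' => ?_, fun t ht => ?_⟩
  · refine disjoint_insert_left.2 ⟨?_,
      disjoint_insert_right.2 ⟨hfL t' ht' t ht, hF.1 (hT ht) (hT ht') htt'⟩⟩
    exact mem_insert.not.2 (not_or.2 ⟨hf.ne ht ht' htt', hfL t ht t' ht'⟩)
  obtain ⟨hc, hcard, hb, htop, hIcc⟩ := hF.2 t (hT ht)
  have hbt : f t ≤ b t := (hfb t ht).le
  refine ⟨isChain_insert_of_le hc fun z hz => hbt.trans (hIcc hz).1,
    by rw [card_insert_of_notMem (hfL t ht t ht), hcard], mem_insert_self _ _,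
    mem_insert_of_mem htop, ?_⟩
  rw [coe_insert]
  exact Set.insert_subset ⟨le_rfl, hbt.trans (hIcc hb).2⟩
    (hIcc.trans (Set.Icc_subset_Icc_left hbt))

end IsChainFamily

end ChainFamilies

section Descent

variable {α : Type*} [PartialOrder α] [Fintype α] {h m n : ℕ} {A' : ℕ → Finset α}

theorem card_add_sum_uCount_le [DecidableEq α] [DecidableLT α]
    (hub : ∀ c : Finset α, IsChain (· ≤ ·) (c : Set α) → #c ≤ h)
    (hA' : ∀ m x, x ∈ A' m ↔ levelAt m x ∧ 0 < uCount h m x)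
    (hm : 0 < m) (hmh : m < h) (hk : #(A' m) = #(A' (m + 1)))
    {S : Finset α} (hS : S ⊆ A' (m + 1)) :
    #S + ∑ x ∈ A' (m + 1), uCount h (m + 1) x ≤
      #(S.biUnion fun x => {y ∈ A' m | y < x}) + ∑ y ∈ A' m, uCount h m y := by
  have := card_add_sum_le_card_biUnion_add_sum (B := A' m) (C := A' (m + 1)) (· < ·)
    (fun x hx => ((hA' _ x).1 hx).2) (fun y hy => ?_) (fun x hx => ?_)
    (fun y _ => sum_uCount_succ_le hmh fun x hx => (mem_filter.1 hx).2) hS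
  · omega
  · obtain ⟨hy, huy⟩ := (hA' m y).1 hy
    obtain ⟨x, hyx, hx, hux⟩ := exists_gt_of_levelAt hub hy huy hmh
    exact ⟨x, (hA' _ x).2 ⟨hx, hux⟩, hyx⟩
  · obtain ⟨hx, hux⟩ := (hA' _ x).1 hx
    obtain ⟨y, hyx, hy, huy⟩ := exists_lt_of_levelAt_succ hx hux hm hmh
    exact ⟨y, (hA' m y).2 ⟨hy, huy⟩, hyx⟩

namespace IsChainFamily

variable {S : Finset α} {L : α → Finset α} {b : α → α}

/-- Defect Hall between the bottoms `b t` and `A' m`, with the defect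
`∑_{A' m} u_m - ∑_{A' (m + 1)} u_{m + 1}` allowed by `card_add_sum_uCount_le`. -/
theorem exists_insert_below [DecidableEq α] [Nonempty α]
    (hub : ∀ c : Finset α, IsChain (· ≤ ·) (c : Set α) → #c ≤ h)
    (hA' : ∀ m x, x ∈ A' m ↔ levelAt m x ∧ 0 < uCount h m x)
    (hm : 0 < m) (hmh : m < h) (hk : #(A' m) = #(A' (m + 1)))
    (hF : IsChainFamily S L b n) (hb : ∀ t ∈ S, b t ∈ A' (m + 1)) :
    ∃ T ⊆ S, ∃ d, #S ≤ #T + d ∧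
      ∑ x ∈ A' (m + 1), uCount h (m + 1) x + d ≤ ∑ y ∈ A' m, uCount h m y ∧
      ∃ f : α → α, IsChainFamily T (fun t => insert (f t) (L t)) f (n + 1) ∧
        ∀ t ∈ T, f t ∈ A' m := by
  classical
  have hmono := card_add_sum_uCount_le hub hA' hm hmh hk (empty_subset _)
  have hhall : ∀ u ⊆ S, #u ≤ #(u.biUnion fun t => {y ∈ A' m | y < b t}) +
      (∑ y ∈ A' m, uCount h m y - ∑ x ∈ A' (m + 1), uCount h (m + 1) x) := fun u hu => by
    have := card_add_sum_uCount_le hub hA' hm hmh hk (S := u.image b)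
      (image_subset_iff.2 fun t ht => hb t (hu ht))
    rw [card_image_of_injOn (hF.injOn_bot.mono hu), image_biUnion] at this
    omega
  obtain ⟨T, hTS, hcard, f, hf, hfN⟩ := exists_subset_injOn_of_card_le_card_biUnion_add hhall
  have hfN' : ∀ t ∈ T, f t ∈ A' m ∧ f t < b t := fun t ht => mem_filter.1 (hfN t ht)
  refine ⟨T, hTS, _, hcard, by simp at hmono; omega, f,
    hF.insert_below hTS hf (fun t ht => (hfN' t ht).2) ?_, fun t ht => (hfN' t ht).1⟩
  -- `f t` lies on level `m`, whereas `L t'` lies above `b t'`, which is on level `m + 1`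
  intro t ht t' ht' hft
  have := levelAt_le_of_le ((hA' _ (b t')).1 (hb t' (hTS ht'))).1 ((hA' m (f t)).1 (hfN' t ht).1).1
    ((hF.2 t' (hTS ht')).2.2.2.2 hft).1
  omega

end IsChainFamily

theorem exists_isChainFamily [Nonempty α]
    (hub : ∀ c : Finset α, IsChain (· ≤ ·) (c : Set α) → #c ≤ h)
    (hA' : ∀ m x, x ∈ A' m ↔ levelAt m x ∧ 0 < uCount h m x)
    {i j k : ℕ} (hi : 0 < i) (hjh : j ≤ h) (hcard : ∀ m, i ≤ m → m ≤ j → #(A' m) = k)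
    (him : i ≤ m) (hmj : m ≤ j) :
    ∃ S ⊆ A' j, ∃ D, k ≤ #S + D ∧
      ∑ x ∈ A' j, uCount h j x + D ≤ ∑ x ∈ A' m, uCount h m x ∧
      ∃ L b, IsChainFamily S L b (j - m + 1) ∧ ∀ t ∈ S, b t ∈ A' m := by
  classical
  induction hmj using Nat.decreasingInduction with
  | self =>
    exact ⟨A' j, subset_rfl, 0, (hcard j him le_rfl).ge, le_rfl, _, id,
      by simpa using isChainFamily_singleton (A' j), fun t ht => ht⟩
  | of_succ l hlj ih =>
    obtain ⟨S, hSj, D, hkS, hsum, L, b, hF, hb⟩ := ih (by omega)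
    obtain ⟨T, hTS, d, hST, hsum', f, hF', hf⟩ := hF.exists_insert_below hub hA' (by omega)
      (by omega) ((hcard l him (by omega)).trans (hcard (l + 1) (by omega) hlj).symm) hb
    rw [show j - (l + 1) + 1 + 1 = j - l + 1 by omega] at hF'
    exact ⟨T, hTS.trans hSj, D + d, by omega, by omega, _, f, hF', hf⟩

end Descent

/-- Disjoint chains through consecutive levels: if `|A'_i| = … = |A'_j| = k` then for
some `d ≥ 0` there are `k − d` pairwise disjoint chains with `j − i + 1` elements,
each with minimum in `A'_i` and maximum in `A'_j`, and `Σ_i ≥ Σ_j + d`. -/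
theorem stmt_18 {P : Type*} [Fintype P] [PartialOrder P] (h k i j : ℕ)
    (hh : (∃ c : Finset P, c.card = h ∧ IsChain (· ≤ ·) (↑c : Set P)) ∧
      ∀ c : Finset P, IsChain (· ≤ ·) (↑c : Set P) → c.card ≤ h)
    (A : ℕ → Finset P) (hA : ∀ m x, x ∈ A m ↔ levelAt m x)
    (hi : 1 ≤ i) (hij : i ≤ j) (hjh : j ≤ h)
    (A' : ℕ → Finset P) (hA' : ∀ m x, x ∈ A' m ↔ x ∈ A m ∧ 1 ≤ uCount h m x)
    (hcard : ∀ m, i ≤ m → m ≤ j → (A' m).card = k) :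
    ∃ (d : ℕ) (L : Fin (k - d) → Finset P),
      (∀ p, (L p).card = j - i + 1 ∧ IsChain (· ≤ ·) (↑(L p) : Set P) ∧
        (∃ x ∈ L p, x ∈ A' i ∧ ∀ y ∈ L p, x ≤ y) ∧
        (∃ x ∈ L p, x ∈ A' j ∧ ∀ y ∈ L p, y ≤ x)) ∧
      (∀ p q, p ≠ q → Disjoint (L p) (L q)) ∧
      (∑ x ∈ A j, uCount h j x) + d ≤ ∑ x ∈ A i, uCount h i x := by
  have hA'_iff : ∀ m x, x ∈ A' m ↔ levelAt m x ∧ 0 < uCount h m x := fun m x => by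
    rw [hA', hA]; rfl
  have hsum : ∀ m, ∑ x ∈ A m, uCount h m x = ∑ x ∈ A' m, uCount h m x := fun m => by
    rw [← sum_filter_ne_zero]
    congr 1
    ext x
    simp [hA', Nat.one_le_iff_ne_zero]
  have : Nonempty P := by
    obtain ⟨c, hc, -⟩ := hh.1
    obtain ⟨x, -⟩ := card_pos.1 (by omega : 0 < #c)
    exact ⟨x⟩
  obtain ⟨S, hSj, D, hkS, hsumD, L, b, hF, hb⟩ :=
    exists_isChainFamily hh.2 hA'_iff hi hjh hcard le_rfl hij
  let e : Fin (k - D) ↪ S := (Fin.castLEEmb (by omega)).trans S.equivFin.symm.toEmbedding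
  refine ⟨D, fun p => L (e p), fun p => ?_, fun p q hpq => hF.1 (e p).2 (e q).2 ?_,
    by rwa [hsum, hsum]⟩
  · obtain ⟨hc, hcard, hbL, htL, hIcc⟩ := hF.2 _ (e p).2
    exact ⟨hcard, hc, ⟨b (e p), hbL, hb _ (e p).2, fun y hy => (hIcc hy).1⟩,
      ⟨e p, htL, hSj (e p).2, fun y hy => (hIcc hy).2⟩⟩
  · exact Subtype.coe_injective.ne (e.injective.ne hpq)
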